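/- Let u > 0, u ≠ 1. Define d0 : ℝ^2 → ℝ^8 with rows (−1,0),(0,0),(0,0),(0,0),(−(1+u^2)/(2u),0),(−1/2,−u/2),(u/2,−1),(0,−1), and d1 : ℝ^8 → ℝ by (0,0,0,0,u/2,−1,(−1+u^2)/(2u),1/(2u)). Then d1 ∘ d0 = 0, d0 is injective, and dim(ker d1 / im d0) = 5. -/

import Mathlib

/-!
Both differentials have explicit one-sided inverses: `d0` is recovered from the first and last
coordinates of its image, and `d1` takes the value `1` on `(0, …, 0, 2u)`. Hence `im d0` has
dimension `2` and `d1` has rank `1`, and since `d1 ∘ d0 = 0` (a direct computation) rank–nullity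
gives `dim (ker d1 / im d0) = (8 - 1) - 2 = 5`.
-/

open Module Matrix

namespace LinearMap

variable {K U V W : Type*} [DivisionRing K] [AddCommGroup U] [Module K U]
  [AddCommGroup V] [Module K V] [AddCommGroup W] [Module K W] [FiniteDimensional K V]

theorem finrank_homology_add_finrank_range_add_finrank_range
    (f : U →ₗ[K] V) (g : V →ₗ[K] W) (hgf : g ∘ₗ f = 0) :
    finrank K (ker g ⧸ (range f).comap (ker g).subtype) + finrank K (range f)
      + finrank K (range g) = finrank K V := by
  have hfg : range f ≤ ker g := range_le_ker_iff.mpr hgf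
  rw [← (Submodule.comapSubtypeEquivOfLe hfg).finrank_eq,
    Submodule.finrank_quotient_add_finrank, ← finrank_range_add_finrank_ker g, add_comm]

end LinearMap

namespace Matrix

variable {K m n : Type*} [CommRing K] [Fintype m] [Fintype n]

theorem mulVecLin_injective_of_mul_eq_one [DecidableEq n] {A : Matrix m n K} {L : Matrix n m K}
    (hLA : L * A = 1) : Function.Injective A.mulVecLin :=
  fun v w h => by
    simpa only [mulVecLin_apply, mulVec_mulVec, hLA, one_mulVec] using congrArg (L *ᵥ ·) h

theorem range_mulVecLin_eq_top_of_mul_eq_one [DecidableEq m] {A : Matrix m n K} {R : Matrix n m K}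
    (hAR : A * R = 1) : LinearMap.range A.mulVecLin = ⊤ :=
  LinearMap.range_eq_top.mpr fun v =>
    ⟨R *ᵥ v, by simp only [mulVecLin_apply, mulVec_mulVec, hAR, one_mulVec]⟩

end Matrix

noncomputable def bounceD0 (u : ℝ) : Matrix (Fin 8) (Fin 2) ℝ :=
  !![-1,0; 0,0; 0,0; 0,0; -(1+u^2)/(2*u),0; -1/2,-u/2; u/2,-1; 0,-1]

noncomputable def bounceD1 (u : ℝ) : Matrix (Fin 1) (Fin 8) ℝ :=
  !![0,0,0,0,u/2,-1,(-1+u^2)/(2*u),1/(2*u)]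

theorem bounceD1_mul_bounceD0 {u : ℝ} (hu : u ≠ 0) : bounceD1 u * bounceD0 u = 0 := by
  ext i j
  fin_cases i; fin_cases j <;>
    simp [bounceD0, bounceD1, mul_apply, Fin.sum_univ_succ] <;> field_simp <;> ring

theorem mul_bounceD0_eq_one (u : ℝ) :
    (!![-1,0,0,0,0,0,0,0; 0,0,0,0,0,0,0,-1] : Matrix (Fin 2) (Fin 8) ℝ) * bounceD0 u = 1 := by
  ext i j
  fin_cases i <;> fin_cases j <;> simp [bounceD0, mul_apply, Fin.sum_univ_succ]

theorem bounceD1_mul_eq_one {u : ℝ} (hu : u ≠ 0) :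
    bounceD1 u * (!![0; 0; 0; 0; 0; 0; 0; 2*u] : Matrix (Fin 8) (Fin 1) ℝ) = 1 := by
  ext i j
  fin_cases i; fin_cases j
  simp [bounceD1, mul_apply, Fin.sum_univ_succ, mul_assoc, hu]

theorem stmt9_general (u : ℝ) (hu : 0 < u) :
    let d0 : (Fin 2 → ℝ) →ₗ[ℝ] (Fin 8 → ℝ) :=
      Matrix.mulVecLin
        (!![-1,0; 0,0; 0,0; 0,0; -(1+u^2)/(2*u),0; -1/2,-u/2; u/2,-1; 0,-1])
    let d1 : (Fin 8 → ℝ) →ₗ[ℝ] (Fin 1 → ℝ) :=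
      Matrix.mulVecLin (!![0,0,0,0,u/2,-1,(-1+u^2)/(2*u),1/(2*u)])
    d1 ∘ₗ d0 = 0 ∧
    Function.Injective d0 ∧
    Module.finrank ℝ
      (↥(LinearMap.ker d1) ⧸
        (LinearMap.range d0).comap (LinearMap.ker d1).subtype) = 5 := by
  intro d0 d1
  have hcomp : d1 ∘ₗ d0 = 0 := by
    change (bounceD1 u).mulVecLin ∘ₗ (bounceD0 u).mulVecLin = 0
    rw [← mulVecLin_mul, bounceD1_mul_bounceD0 hu.ne', mulVecLin_zero]
  have hinj : Function.Injective d0 := mulVecLin_injective_of_mul_eq_one (mul_bounceD0_eq_one u)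
  have hsurj : LinearMap.range d1 = ⊤ :=
    range_mulVecLin_eq_top_of_mul_eq_one (bounceD1_mul_eq_one hu.ne')
  have hrank := LinearMap.finrank_homology_add_finrank_range_add_finrank_range d0 d1 hcomp
  rw [LinearMap.finrank_range_of_inj hinj, hsurj, finrank_top] at hrank
  simp only [finrank_fin_fun] at hrank
  exact ⟨hcomp, hinj, by omega⟩

theorem stmt9 (u : ℝ) (hu : 0 < u) (hu1 : u ≠ 1) :
    let d0 : (Fin 2 → ℝ) →ₗ[ℝ] (Fin 8 → ℝ) :=
      Matrix.mulVecLin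
        (!![-1,0; 0,0; 0,0; 0,0; -(1+u^2)/(2*u),0; -1/2,-u/2; u/2,-1; 0,-1])
    let d1 : (Fin 8 → ℝ) →ₗ[ℝ] (Fin 1 → ℝ) :=
      Matrix.mulVecLin (!![0,0,0,0,u/2,-1,(-1+u^2)/(2*u),1/(2*u)])
    d1 ∘ₗ d0 = 0 ∧
    Function.Injective d0 ∧
    Module.finrank ℝ
      (↥(LinearMap.ker d1) ⧸
        (LinearMap.range d0).comap (LinearMap.ker d1).subtype) = 5 :=
  stmt9_general u hu
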